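/- Given a strictly convex quadrilateral with non-orthogonal diagonals whose vertices are labeled r1, r2, r3, r4 in clockwise order, the corresponding targets p1, p2, p3, p4 (the vertices of the target square, with pi lying on the guideline ℓi of ri) also appear in clockwise order around the target square, and conversely. -/

import Mathlib

/-!
Every consecutive orientation of the midpoints `p1 p2 p3 p4` of the sides of the guideline square
`Q` equals a quarter of the cross product of the diagonals `a23 - a41`, `a34 - a12` of `Q`. With
`d = q - r3` the direction of `ℓ1` and `ℓ3`, these diagonals have components `±⟪r2 - r4, d⟫` along
`d` and `⟪r3 - r1, rot90 d⟫` along `rot90 d`, so their cross product is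
`2 ⟪r2 - r4, d⟫ ⟪r3 - r1, rot90 d⟫ / ‖d‖²`. As `q - r1 = ε • rot90 (r4 - r2)` with `ε = ±1`, this
is `-2 ε ⟪r3 - r1, r4 - r2⟫² / ‖d‖²`, of sign `-ε` since the diagonals are not orthogonal. On the
other side, the ray from `r1` through `q` meets the line `r2 r4` only if the corner `r4 r1 r2`
turns with sign `-ε`, and in a convex quadrilateral this one corner decides the orientation.
-/

open EuclideanGeometry Real
open scoped RealInnerProductSpace

noncomputable section

abbrev Pt := EuclideanSpace ℝ (Fin 2)

/-- Cross product of two planar vectors. -/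
def cross2 (u v : Pt) : ℝ := u 0 * v 1 - u 1 * v 0

/-- Rotation of a planar vector by 90 degrees counterclockwise. -/
def rot90 (v : Pt) : Pt := !₂[-(v 1), v 0]

/-- The line through `a` with direction vector `d`. -/
def lineDir (a d : Pt) : Set Pt := {p | cross2 (p - a) d = 0}

/-- The line through two points, as a set. -/
def lineThru (a b : Pt) : Set Pt := (affineSpan ℝ {a, b} : Set Pt)

/-- Strictly convex position in the given cyclic order. -/
def Convex4 (a b c d : Pt) : Prop :=
  (0 < cross2 (b-a) (c-b) ∧ 0 < cross2 (c-b) (d-c) ∧ 0 < cross2 (d-c) (a-d) ∧ 0 < cross2 (a-d) (b-a)) ∨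
  (cross2 (b-a) (c-b) < 0 ∧ cross2 (c-b) (d-c) < 0 ∧ cross2 (d-c) (a-d) < 0 ∧ cross2 (a-d) (b-a) < 0)

/-- `a b c d` in clockwise order: every consecutive triple has negative orientation. -/
def Clockwise4 (a b c d : Pt) : Prop :=
  cross2 (b-a) (c-b) < 0 ∧ cross2 (c-b) (d-c) < 0 ∧ cross2 (d-c) (a-d) < 0 ∧ cross2 (a-d) (b-a) < 0

/-- A (nondegenerate) square: four equal sides and four right angles. -/
def IsSquare4 (a b c d : Pt) : Prop :=
  a ≠ b ∧ dist a b = dist b c ∧ dist b c = dist c d ∧ dist c d = dist d a ∧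
  inner ℝ (b - a) (d - a) = (0:ℝ) ∧ inner ℝ (a - b) (c - b) = (0:ℝ) ∧
  inner ℝ (b - c) (d - c) = (0:ℝ) ∧ inner ℝ (c - d) (a - d) = (0:ℝ)

/-- `q` is the auxiliary point of the target-square construction for `r1 r2 r3 r4`:
`dist r1 q = dist r2 r4`, the lines `r1 q` and `r2 r4` are orthogonal, and the ray
from `r1` through `q` intersects the line `r2 r4`. -/
def IsQPoint (r1 r2 r3 r4 q : Pt) : Prop :=
  dist r1 q = dist r2 r4 ∧ inner ℝ (q - r1) (r4 - r2) = (0:ℝ) ∧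
  ∃ t : ℝ, 0 ≤ t ∧ r1 + t • (q - r1) ∈ lineDir r2 (r4 - r2)

@[simp] theorem rot90_apply_zero (v : Pt) : rot90 v 0 = -v 1 := rfl

@[simp] theorem rot90_apply_one (v : Pt) : rot90 v 1 = v 0 := rfl

theorem Pt.ext_coords {x y : Pt} (h0 : x 0 = y 0) (h1 : x 1 = y 1) : x = y := by
  ext i
  fin_cases i
  exacts [h0, h1]

theorem inner_eq_coords (x y : Pt) : ⟪x, y⟫ = x 0 * y 0 + x 1 * y 1 := by
  simp [PiLp.inner_apply, Fin.sum_univ_two, mul_comm]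

theorem norm_sq_eq_coords (x : Pt) : ‖x‖ ^ 2 = x 0 ^ 2 + x 1 ^ 2 := by
  simp [EuclideanSpace.norm_sq_eq, Fin.sum_univ_two]

theorem midpoint_apply (a b : Pt) (i : Fin 2) : midpoint ℝ a b i = (a i + b i) / 2 := by
  simp only [midpoint_eq_smul_add, invOf_eq_inv, smul_add, PiLp.add_apply, PiLp.smul_apply,
    smul_eq_mul]
  ring

theorem mem_lineDir_iff {p a d : Pt} : p ∈ lineDir a d ↔ ⟪p - a, rot90 d⟫ = 0 := by
  simp only [lineDir, Set.mem_ofPred_eq, cross2, inner_eq_coords, rot90_apply_zero, rot90_apply_one]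
  constructor <;> intro h <;> linarith

theorem mem_lineDir_rot90_iff {p a d : Pt} : p ∈ lineDir a (rot90 d) ↔ ⟪p - a, d⟫ = 0 := by
  simp only [lineDir, Set.mem_ofPred_eq, cross2, inner_eq_coords, rot90_apply_zero, rot90_apply_one]
  constructor <;> intro h <;> linarith

theorem cross2_mul_norm_sq (x y d : Pt) :
    cross2 x y * ‖d‖ ^ 2 = ⟪x, d⟫ * ⟪y, rot90 d⟫ - ⟪x, rot90 d⟫ * ⟪y, d⟫ := by
  simp only [cross2, norm_sq_eq_coords, inner_eq_coords, rot90_apply_zero, rot90_apply_one]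
  ring

theorem clockwise4_midpoint_iff (a b c d : Pt) :
    Clockwise4 (midpoint ℝ d a) (midpoint ℝ a b) (midpoint ℝ b c) (midpoint ℝ c d) ↔
      cross2 (b - d) (c - a) < 0 := by
  simp only [Clockwise4, cross2, PiLp.sub_apply, midpoint_apply]
  constructor
  · rintro ⟨h, -⟩
    linarith
  · intro h
    refine ⟨?_, ?_, ?_, ?_⟩ <;> linarith

theorem Convex4.clockwise4_iff {a b c d : Pt} (h : Convex4 a b c d) :
    Clockwise4 a b c d ↔ cross2 (a - d) (b - a) < 0 := by
  refine ⟨fun hcw => hcw.2.2.2, fun hneg => ?_⟩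
  rcases h with hpos | hcw
  · exact absurd hpos.2.2.2 hneg.not_gt
  · exact hcw

theorem Convex4.cross2_ne_zero {a b c d : Pt} (h : Convex4 a b c d) :
    cross2 (a - d) (b - a) ≠ 0 := by
  rcases h with h | h
  · exact h.2.2.2.ne'
  · exact h.2.2.2.ne

theorem inner_sub_eq_of_inner_sub_eq_zero {E : Type*} [NormedAddCommGroup E]
    [InnerProductSpace ℝ E] {p a p' a' v : E} (h : ⟪p - a, v⟫ = 0) (h' : ⟪p' - a', v⟫ = 0) :
    ⟪p - p', v⟫ = ⟪a - a', v⟫ := by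
  rw [show p - p' = (p - a) - (p' - a') + (a - a') by abel, inner_add_left, inner_sub_left, h, h',
    sub_zero, zero_add]

theorem cross2_diagonals_mul_norm_sq {r1 r2 r3 r4 d a12 a23 a34 a41 : Pt}
    (ha12 : a12 ∈ lineDir r1 d ∩ lineDir r2 (rot90 d))
    (ha23 : a23 ∈ lineDir r2 (rot90 d) ∩ lineDir r3 d)
    (ha34 : a34 ∈ lineDir r3 d ∩ lineDir r4 (rot90 d))
    (ha41 : a41 ∈ lineDir r4 (rot90 d) ∩ lineDir r1 d) :
    cross2 (a23 - a41) (a34 - a12) * ‖d‖ ^ 2 = 2 * ⟪r2 - r4, d⟫ * ⟪r3 - r1, rot90 d⟫ := by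
  simp only [Set.mem_inter_iff, mem_lineDir_rot90_iff] at ha12 ha23 ha34 ha41
  simp only [mem_lineDir_iff] at ha12 ha23 ha34 ha41
  have h1 : ⟪a23 - a41, d⟫ = ⟪r2 - r4, d⟫ := inner_sub_eq_of_inner_sub_eq_zero ha23.1 ha41.1
  have h2 : ⟪a23 - a41, rot90 d⟫ = ⟪r3 - r1, rot90 d⟫ :=
    inner_sub_eq_of_inner_sub_eq_zero ha23.2 ha41.2
  have h3 : ⟪a34 - a12, d⟫ = ⟪r4 - r2, d⟫ := inner_sub_eq_of_inner_sub_eq_zero ha34.2 ha12.2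
  have h4 : ⟪a34 - a12, rot90 d⟫ = ⟪r3 - r1, rot90 d⟫ :=
    inner_sub_eq_of_inner_sub_eq_zero ha34.1 ha12.1
  rw [cross2_mul_norm_sq, h1, h2, h3, h4, ← neg_sub r2 r4, inner_neg_left]
  ring

theorem eq_rot90_or_eq_neg_rot90 {v w : Pt} (hn : ‖v‖ = ‖w‖) (ho : ⟪v, w⟫ = 0) :
    v = rot90 w ∨ v = -rot90 w := by
  have hn2 : ‖v‖ ^ 2 = ‖w‖ ^ 2 := by rw [hn]
  rw [norm_sq_eq_coords, norm_sq_eq_coords] at hn2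
  rw [inner_eq_coords] at ho
  -- `‖v - rot90 w‖² * ‖v + rot90 w‖² = (‖v‖² - ‖w‖²)² + 4 * ⟪v, w⟫²`
  have key : ((v 0 + w 1) ^ 2 + (v 1 - w 0) ^ 2) * ((v 0 - w 1) ^ 2 + (v 1 + w 0) ^ 2) = 0 := by
    linear_combination 4 * (v 0 * w 0 + v 1 * w 1) * ho
      + (v 0 ^ 2 + v 1 ^ 2 - w 0 ^ 2 - w 1 ^ 2) * hn2
  rcases mul_eq_zero.mp key with h | h
  · obtain ⟨h0, h1⟩ := (add_eq_zero_iff_of_nonneg (sq_nonneg _) (sq_nonneg _)).mp h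
    left
    refine Pt.ext_coords ?_ ?_ <;> simp only [rot90_apply_zero, rot90_apply_one]
    · linarith [pow_eq_zero_iff two_ne_zero |>.mp h0]
    · linarith [pow_eq_zero_iff two_ne_zero |>.mp h1]
  · obtain ⟨h0, h1⟩ := (add_eq_zero_iff_of_nonneg (sq_nonneg _) (sq_nonneg _)).mp h
    right
    refine Pt.ext_coords ?_ ?_ <;> simp only [PiLp.neg_apply, rot90_apply_zero, rot90_apply_one]
    · linarith [pow_eq_zero_iff two_ne_zero |>.mp h0]
    · linarith [pow_eq_zero_iff two_ne_zero |>.mp h1]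

theorem mul_cross2_nonpos_of_mem_lineDir {r1 r2 r4 q : Pt} {s t : ℝ}
    (hs : q - r1 = s • rot90 (r4 - r2)) (ht : 0 ≤ t)
    (hray : r1 + t • (q - r1) ∈ lineDir r2 (r4 - r2)) :
    s * cross2 (r1 - r4) (r2 - r1) ≤ 0 := by
  rw [hs] at hray
  simp only [lineDir, Set.mem_ofPred_eq, cross2, PiLp.add_apply, PiLp.sub_apply,
    PiLp.smul_apply, smul_eq_mul, rot90_apply_zero, rot90_apply_one] at hray
  have h : s * cross2 (r1 - r4) (r2 - r1)
      = -(t * (s ^ 2 * ((r4 0 - r2 0) ^ 2 + (r4 1 - r2 1) ^ 2))) := by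
    simp only [cross2, PiLp.sub_apply]
    linear_combination (-s) * hray
  rw [h, neg_nonpos]
  positivity

theorem inner_mul_inner_rot90_of_eq_smul_rot90 {r1 r2 r3 r4 q : Pt} {s : ℝ}
    (hs : q - r1 = s • rot90 (r4 - r2)) :
    ⟪r2 - r4, q - r3⟫ * ⟪r3 - r1, rot90 (q - r3)⟫ = -s * ⟪r3 - r1, r4 - r2⟫ ^ 2 := by
  obtain rfl : q = r1 + s • rot90 (r4 - r2) := by rw [← hs]; abel
  simp only [inner_eq_coords, PiLp.add_apply, PiLp.sub_apply, PiLp.smul_apply, smul_eq_mul,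
    rot90_apply_zero, rot90_apply_one]
  ring

/-- The vertices of a strictly convex quadrilateral with non-orthogonal diagonals are in
clockwise order if and only if their targets are in clockwise order. -/
theorem stmt4
    (r1 r2 r3 r4 q a12 a23 a34 a41 : Pt)
    (hconv : Convex4 r1 r2 r3 r4)
    (hdiag : inner ℝ (r3 - r1) (r4 - r2) ≠ (0:ℝ))
    (hq : IsQPoint r1 r2 r3 r4 q) (hq3 : q ≠ r3)
    (ha12 : a12 ∈ lineDir r1 (q - r3) ∩ lineDir r2 (rot90 (q - r3)))
    (ha23 : a23 ∈ lineDir r2 (rot90 (q - r3)) ∩ lineDir r3 (q - r3))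
    (ha34 : a34 ∈ lineDir r3 (q - r3) ∩ lineDir r4 (rot90 (q - r3)))
    (ha41 : a41 ∈ lineDir r4 (rot90 (q - r3)) ∩ lineDir r1 (q - r3))
    (p1 p2 p3 p4 : Pt)
    (hp1 : p1 = midpoint ℝ a41 a12) (hp2 : p2 = midpoint ℝ a12 a23)
    (hp3 : p3 = midpoint ℝ a23 a34) (hp4 : p4 = midpoint ℝ a34 a41)
 :
    Clockwise4 r1 r2 r3 r4 ↔ Clockwise4 p1 p2 p3 p4 := by
  obtain ⟨hdist, horth, t, ht, hray⟩ := hq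
  have hnorm : ‖q - r1‖ = ‖r4 - r2‖ := by
    rw [← dist_eq_norm, dist_comm, hdist, dist_comm, dist_eq_norm]
  obtain ⟨s, hs, hqs⟩ : ∃ s : ℝ, (s = 1 ∨ s = -1) ∧ q - r1 = s • rot90 (r4 - r2) := by
    rcases eq_rot90_or_eq_neg_rot90 hnorm horth with h | h
    · exact ⟨1, .inl rfl, by rw [h, one_smul]⟩
    · exact ⟨-1, .inr rfl, by rw [h, neg_one_smul]⟩
  have hcorner := mul_cross2_nonpos_of_mem_lineDir hqs ht hray
  have hdiagonals : cross2 (a23 - a41) (a34 - a12) * ‖q - r3‖ ^ 2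
      = -2 * s * ⟪r3 - r1, r4 - r2⟫ ^ 2 := by
    rw [cross2_diagonals_mul_norm_sq ha12 ha23 ha34 ha41, mul_assoc,
      inner_mul_inner_rot90_of_eq_smul_rot90 hqs]
    ring
  have hD : 0 < ‖q - r3‖ ^ 2 := pow_pos (norm_pos_iff.mpr (sub_ne_zero.mpr hq3)) 2
  have hg : 0 < ⟪r3 - r1, r4 - r2⟫ ^ 2 := sq_pos_of_ne_zero hdiag
  subst hp1 hp2 hp3 hp4
  rw [hconv.clockwise4_iff, clockwise4_midpoint_iff]
  rcases hs with rfl | rfl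
  · exact iff_of_true (lt_of_le_of_ne (by linarith) hconv.cross2_ne_zero) (by nlinarith)
  · exact iff_of_false (by linarith) (by nlinarith)

end
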